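/- arXiv:0809.2528 — 7 statements merged into one kernel-verified Lean document; each statement's English description precedes it below -/
import Mathlib

section
/- Let D₀ = id, D₁, D₂, … be the unique sequence of endomorphisms of ⋀M_n satisfying the h-th Leibniz rule D_h(p ∧ q) = Σ_{h₁+h₂=h} D_{h₁}p ∧ D_{h₂}q and the initial conditions D_l ε^i = ε^{i+l} on M_n. Then the operators D_i pairwise commute: D_i ∘ D_j = D_j ∘ D_i on ⋀M_n for all i, j ≥ 0. -/
/-!
The elements on which all `D i` commute with all `D j` form a subalgebra: for a product, the
Leibniz rule expands both `D i (D j (a * b))` and `D j (D i (a * b))` into the same double sum,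
and scalars are handled by `D h 1 = 0` for `h > 0`. This subalgebra contains every generator
`ε^k`, since both composites send it to `ε^(k + i + j)`, hence it is all of `⋀M_n`.
-/

open ExteriorAlgebra Finset

section HasseSchmidt

variable {R A : Type*} [CommSemiring R] [Ring A] [Algebra R A]

def IsHasseSchmidt (D : ℕ → Module.End R A) : Prop :=
  D 0 = 1 ∧ ∀ (h : ℕ) (p q : A), D h (p * q) = ∑ x ∈ antidiagonal h, D x.1 p * D x.2 q

namespace IsHasseSchmidt

variable {D E : ℕ → Module.End R A}

theorem apply_one_of_ne_zero (hD : IsHasseSchmidt D) {h : ℕ} (hh : h ≠ 0) : D h 1 = 0 := by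
  induction h using Nat.strong_induction_on with
  | _ h ih =>
    have hsplit := hD.2 h 1 1
    rw [one_mul, Nat.sum_antidiagonal_eq_sum_range_succ_mk, sum_range_succ,
      sum_eq_single_of_mem 0 (mem_range.mpr (Nat.pos_of_ne_zero hh))] at hsplit
    · simpa [hD.1] using hsplit
    · intro k hk hk0
      rw [ih k (mem_range.mp hk) hk0, zero_mul]

theorem apply_apply_one_comm (hD : IsHasseSchmidt D) (hE : IsHasseSchmidt E) (i j : ℕ) :
    D i (E j 1) = E j (D i 1) := by
  rcases eq_or_ne i 0 with rfl | hi
  · simp [hD.1]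
  rcases eq_or_ne j 0 with rfl | hj
  · simp [hE.1]
  rw [hD.apply_one_of_ne_zero hi, hE.apply_one_of_ne_zero hj, map_zero, map_zero]

def commSubalgebra (hD : IsHasseSchmidt D) (hE : IsHasseSchmidt E) : Subalgebra R A where
  carrier := {x | ∀ i j, D i (E j x) = E j (D i x)}
  mul_mem' {a b} ha hb i j := by
    calc D i (E j (a * b))
        = ∑ q ∈ antidiagonal j, ∑ p ∈ antidiagonal i, D p.1 (E q.1 a) * D p.2 (E q.2 b) := by
          rw [hE.2, map_sum]
          exact sum_congr rfl fun q _ => hD.2 i _ _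
      _ = ∑ p ∈ antidiagonal i, ∑ q ∈ antidiagonal j, E q.1 (D p.1 a) * E q.2 (D p.2 b) := by
          rw [sum_comm]
          exact sum_congr rfl fun p _ => sum_congr rfl fun q _ => by rw [ha, hb]
      _ = E j (D i (a * b)) := by
          rw [hD.2, map_sum]
          exact (sum_congr rfl fun p _ => hE.2 j _ _).symm
  add_mem' ha hb i j := by simp only [map_add, ha i j, hb i j]
  algebraMap_mem' r i j := by
    simp only [Algebra.algebraMap_eq_smul_one, map_smul, hD.apply_apply_one_comm hE]

end IsHasseSchmidt

end HasseSchmidt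

theorem ExteriorAlgebra.subalgebra_eq_top_of_ι_mem {R M : Type*} [CommRing R] [AddCommGroup M]
    [Module R M] {s : Set M} (hs : Submodule.span R s = ⊤)
    (S : Subalgebra R (ExteriorAlgebra R M)) (h : ∀ m ∈ s, ι R m ∈ S) : S = ⊤ := by
  have hι : ∀ m, ι R m ∈ S := fun m =>
    (hs ▸ Submodule.span_le (p := S.toSubmodule.comap (ι R)) |>.mpr h) Submodule.mem_top
  rw [eq_top_iff, ← CliffordAlgebra.adjoin_range_ι]
  exact Algebra.adjoin_le (Set.range_subset_iff.mpr hι)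

open ExteriorAlgebra in
theorem hasseSchmidt_comm_general (n : ℕ) (M : Type*) [AddCommGroup M] [Module ℤ M]
    (ε : ℕ → M)
    (hspan : Submodule.span ℤ {x : M | ∃ i : ℕ, 1 ≤ i ∧ i ≤ n ∧ x = ε i} = ⊤)
    (D : ℕ → Module.End ℤ (ExteriorAlgebra ℤ M))
    (hD0 : D 0 = 1)
    (hLeib : ∀ (h : ℕ) (p q : ExteriorAlgebra ℤ M),
      D h (p * q) = ∑ x ∈ Finset.HasAntidiagonal.antidiagonal h, D x.1 p * D x.2 q)
    (hinit : ∀ l i : ℕ, 1 ≤ i → D l (ι ℤ (ε i)) = ι ℤ (ε (i + l))) :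
    ∀ i j : ℕ, D i * D j = D j * D i := by
  have hD : IsHasseSchmidt D := ⟨hD0, hLeib⟩
  have htop : hD.commSubalgebra hD = ⊤ := by
    refine subalgebra_eq_top_of_ι_mem hspan _ ?_
    rintro _ ⟨k, hk, -, rfl⟩ i j
    change D i (D j _) = D j (D i _)
    rw [hinit j k hk, hinit i k hk, hinit i _ (by omega), hinit j _ (by omega),
      add_right_comm]
  intro i j
  refine LinearMap.ext fun x => ?_
  exact (htop ▸ Algebra.mem_top : x ∈ hD.commSubalgebra hD) i j

open ExteriorAlgebra in
/-- The Hasse–Schmidt derivation operators `D₀ = id, D₁, D₂, …` on `⋀M_n`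
(satisfying the `h`-th Leibniz rule and the initial conditions `D_l ε^i = ε^{i+l}`)
pairwise commute. -/
theorem hasseSchmidt_comm (n : ℕ) (M : Type*) [AddCommGroup M] [Module ℤ M]
    (ε : ℕ → M) (hε : ∀ m : ℕ, n < m → ε m = 0)
    (hspan : Submodule.span ℤ {x : M | ∃ i : ℕ, 1 ≤ i ∧ i ≤ n ∧ x = ε i} = ⊤)
    (D : ℕ → Module.End ℤ (ExteriorAlgebra ℤ M))
    (hD0 : D 0 = 1)
    (hLeib : ∀ (h : ℕ) (p q : ExteriorAlgebra ℤ M),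
      D h (p * q) = ∑ x ∈ Finset.HasAntidiagonal.antidiagonal h, D x.1 p * D x.2 q)
    (hinit : ∀ l i : ℕ, 1 ≤ i → D l (ι ℤ (ε i)) = ι ℤ (ε (i + l))) :
    ∀ i j : ℕ, D i * D j = D j * D i :=
  hasseSchmidt_comm_general n M ε hspan D hD0 hLeib hinit
end

section
/- For the Hasse–Schmidt derivation operators D_h on ⋀M_n (with D_lε^i = ε^{i+l}), for all i ≥ 1, h ≥ 1 and p ∈ ⋀M_n one has D_h(ε^i ∧ p) = ε^i ∧ D_h p + D_{h−1}(ε^{i+1} ∧ p). -/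
open Finset

section ShiftSequence

variable {A : Type*} [Mul A] [AddCommMonoid A] (D : ℕ → A → A)
  (hLeib : ∀ (h : ℕ) (p q : A), D h (p * q) = ∑ x ∈ antidiagonal h, D x.1 p * D x.2 q)
  (e : ℕ → A) (he : ∀ l k : ℕ, D l (e k) = e (k + l))
include hLeib he

theorem leibniz_apply_shift_mul (h k : ℕ) (p : A) :
    D h (e k * p) = ∑ x ∈ antidiagonal h, e (k + x.1) * D x.2 p := by
  simp only [hLeib, he]

theorem leibniz_succ_apply_shift_mul (h k : ℕ) (p : A) :
    D (h + 1) (e k * p) = e k * D (h + 1) p + D h (e (k + 1) * p) := by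
  -- Split off the term `(0, h + 1)`; shifting the first index of the rest by one gives the
  -- expansion of `D h (e (k + 1) * p)`.
  simp only [leibniz_apply_shift_mul D hLeib e he, Nat.sum_antidiagonal_succ, add_zero,
    add_assoc, add_comm 1]

end ShiftSequence

open ExteriorAlgebra in
theorem hasseSchmidt_peel_general (M : Type*) [AddCommGroup M] [Module ℤ M]
    (ε : ℕ → M)
    (D : ℕ → Module.End ℤ (ExteriorAlgebra ℤ M))
    (hLeib : ∀ (h : ℕ) (p q : ExteriorAlgebra ℤ M),
      D h (p * q) = ∑ x ∈ Finset.HasAntidiagonal.antidiagonal h, D x.1 p * D x.2 q)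
    (hinit : ∀ l i : ℕ, 1 ≤ i → D l (ι ℤ (ε i)) = ι ℤ (ε (i + l))) :
    ∀ (i h : ℕ) (p : ExteriorAlgebra ℤ M), 1 ≤ i → 1 ≤ h →
      D h (ι ℤ (ε i) * p) =
        ι ℤ (ε i) * D h p + D (h - 1) (ι ℤ (ε (i + 1)) * p) := by
  intro i h p hi hh
  obtain ⟨h, rfl⟩ := Nat.exists_eq_add_of_le' hh
  have hshift : ∀ l k : ℕ, D l (ι ℤ (ε (i + k))) = ι ℤ (ε (i + (k + l))) := fun l k => by
    rw [hinit l _ (hi.trans (Nat.le_add_right i k)), add_assoc]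
  simpa using leibniz_succ_apply_shift_mul (fun h => D h) hLeib _ hshift h 0 p

open ExteriorAlgebra in
/-- For the Hasse–Schmidt operators `D_h` on `⋀M_n`:
`D_h(ε^i ∧ p) = ε^i ∧ D_h p + D_{h−1}(ε^{i+1} ∧ p)` for `i ≥ 1`, `h ≥ 1`. -/
theorem hasseSchmidt_peel (n : ℕ) (M : Type*) [AddCommGroup M] [Module ℤ M]
    (ε : ℕ → M) (hε : ∀ m : ℕ, n < m → ε m = 0)
    (D : ℕ → Module.End ℤ (ExteriorAlgebra ℤ M))
    (hD0 : D 0 = 1)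
    (hLeib : ∀ (h : ℕ) (p q : ExteriorAlgebra ℤ M),
      D h (p * q) = ∑ x ∈ Finset.HasAntidiagonal.antidiagonal h, D x.1 p * D x.2 q)
    (hinit : ∀ l i : ℕ, 1 ≤ i → D l (ι ℤ (ε i)) = ι ℤ (ε (i + l))) :
    ∀ (i h : ℕ) (p : ExteriorAlgebra ℤ M), 1 ≤ i → 1 ≤ h →
      D h (ι ℤ (ε i) * p) =
        ι ℤ (ε i) * D h p + D (h - 1) (ι ℤ (ε (i + 1)) * p) :=
  hasseSchmidt_peel_general M ε D hLeib hinit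
end

section
/- For the inverse Hasse–Schmidt operators 𝔇_h on ⋀M_n, for all h ≥ 1, m ≥ 0 and i₁,…,i_h ≥ 1: 𝔇_{h−1}^m(ε^{i₁} ∧ ⋯ ∧ ε^{i_h}) = Σ_{μ∈p_h(m)} (m!/(μ₁!⋯μ_h!)) · ε^{i₁+Σ_{j≠1}μ_j} ∧ ⋯ ∧ ε^{i_h+Σ_{j≠h}μ_j}. -/
/-!
By the Leibniz rule, `D_c` kills `1` for `c > 0`, and on a product of `h` elements that are
killed by every `D_j` with `j ≥ 2` it vanishes in degrees `c > h`, sends the product to the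
product of the `D_1`-images in degree `h`, and in degree `h - 1` gives the sum, over `k`, of the
products in which every factor but the `k`-th is replaced by its `D_1`-image. So `D_{h-1}` acts
on the wedge products `T μ = ε^{i₁+Σ_{j≠1}μ_j} ∧ ⋯ ∧ ε^{i_h+Σ_{j≠h}μ_j}` as multiplication
by `X₁ + ⋯ + X_h` acts on the monomials `X^μ`, and the formula for `D_{h-1}^m (T 0)` is the
multinomial expansion of `(X₁ + ⋯ + X_h)^m`.
-/

open Finset

namespace HasseSchmidt

variable {A : Type*} [Ring A] {D : ℕ → A → A} (hD0 : ∀ x, D 0 x = x)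
  (hD : ∀ n x y, D n (x * y) = ∑ p ∈ antidiagonal n, D p.1 x * D p.2 y)
include hD0 hD

theorem apply_one_of_pos {n : ℕ} (hn : 0 < n) : D n 1 = 0 := by
  induction n using Nat.strong_induction_on with
  | _ n ih =>
    obtain ⟨n, rfl⟩ := Nat.exists_eq_add_one_of_ne_zero hn.ne'
    -- both extreme terms of the expansion of `D (n + 1) (1 * 1)` are `D (n + 1) 1`
    have h := hD (n + 1) 1 1
    rw [one_mul, Nat.sum_antidiagonal_eq_sum_range_succ_mk, sum_range_succ,
      sum_range_succ', sum_eq_zero fun k hk => by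
        rw [ih (k + 1) (by simp at hk; omega) k.succ_pos, zero_mul]] at h
    simpa [hD0] using h

theorem apply_succ_mul {x : A} (hx : ∀ j, 2 ≤ j → D j x = 0) (n : ℕ) (y : A) :
    D (n + 1) (x * y) = x * D (n + 1) y + D 1 x * D n y := by
  rw [hD, Nat.sum_antidiagonal_eq_sum_range_succ_mk, sum_range_succ', sum_range_succ',
    sum_eq_zero fun k _ => by rw [hx (k + 1 + 1) (by omega), zero_mul]]
  simp [hD0, add_comm]

theorem apply_prod_ofFn_of_lt {h : ℕ} {a : Fin h → A} (ha : ∀ k j, 2 ≤ j → D j (a k) = 0)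
    {n : ℕ} (hn : h < n) :
    D n (List.ofFn a).prod = 0 := by
  induction h generalizing n with
  | zero => simpa using apply_one_of_pos hD0 hD hn
  | succ h ih =>
    obtain ⟨n, rfl⟩ := Nat.exists_eq_add_one_of_ne_zero (by omega : n ≠ 0)
    rw [List.ofFn_succ, List.prod_cons, apply_succ_mul hD0 hD (ha 0),
      ih (fun k => ha k.succ) (by omega), ih (fun k => ha k.succ) (by omega), mul_zero,
      mul_zero, add_zero]

theorem apply_prod_ofFn_self {h : ℕ} {a : Fin h → A} (ha : ∀ k j, 2 ≤ j → D j (a k) = 0) :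
    D h (List.ofFn a).prod = (List.ofFn fun k => D 1 (a k)).prod := by
  induction h with
  | zero => simp [hD0]
  | succ h ih =>
    rw [List.ofFn_succ, List.prod_cons, apply_succ_mul hD0 hD (ha 0),
      apply_prod_ofFn_of_lt hD0 hD (fun k => ha k.succ) h.lt_succ_self,
      ih (fun k => ha k.succ), List.ofFn_succ, List.prod_cons, mul_zero, zero_add]

theorem apply_prod_ofFn_succ {h : ℕ} {a : Fin (h + 1) → A}
    (ha : ∀ k j, 2 ≤ j → D j (a k) = 0) :
    D h (List.ofFn a).prod =
      ∑ k, (List.ofFn fun j => if j = k then a j else D 1 (a j)).prod := by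
  induction h with
  | zero => simp [hD0, List.ofFn_succ]
  | succ h ih =>
    rw [List.ofFn_succ, List.prod_cons, apply_succ_mul hD0 hD (ha 0),
      ih (fun k => ha k.succ), apply_prod_ofFn_self hD0 hD (fun k => ha k.succ),
      Fin.sum_univ_succ (n := h + 1), mul_sum]
    simp only [List.ofFn_succ, List.prod_cons, Fin.succ_ne_zero, if_true, if_false,
      Fin.succ_inj, (Fin.succ_ne_zero _).symm]

end HasseSchmidt

open MvPolynomial in
theorem Module.End.pow_apply_eq_sum_multinomial {R E σ : Type*} [CommSemiring R]
    [AddCommMonoid E] [Module R E] [Fintype σ] [DecidableEq σ]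
    (F : Module.End R E) (T : (σ → ℕ) → E)
    (hT : ∀ s, F (T s) = ∑ k, T (s + Pi.single k 1)) (m : ℕ) :
    (F ^ m) (T 0) = ∑ μ ∈ piAntidiag univ m, Nat.multinomial univ μ • T μ := by
  -- `Φ (X^s) = T s` intertwines multiplication by `∑ k, X k` with `F`
  let Φ : MvPolynomial σ R →ₗ[R] E := (basisMonomials σ R).constr R fun s => T s
  have hΦ : ∀ s, Φ (monomial s 1) = T s := fun s => by
    simpa using (basisMonomials σ R).constr_basis R (fun s => T s) s
  have hcomm : F ∘ₗ Φ = Φ ∘ₗ LinearMap.mulLeft R (∑ k, X k) :=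
    (basisMonomials σ R).ext fun s => by
      simp only [coe_basisMonomials, LinearMap.comp_apply, LinearMap.mulLeft_apply, hΦ, hT,
        sum_mul, map_sum]
      refine Fintype.sum_congr _ _ fun k => ?_
      rw [← pow_one (X k), ← monomial_single_add, hΦ]
      congr 1; ext j; simp [Pi.single_apply, Finsupp.single_apply, eq_comm, add_comm]
  have hmonomial (μ : σ → ℕ) :
      ∏ k, X k ^ μ k = monomial (Finsupp.equivFunOnFinite.symm μ) (1 : R) := by
    rw [prod_X_pow]
    exact congrArg (monomial · 1) (Finsupp.ext fun j => by simp)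
  have hpow := LinearMap.congr_fun (Module.End.commute_pow_left_of_commute hcomm m) 1
  rw [LinearMap.comp_apply, one_def, hΦ, Finsupp.coe_zero, ← one_def] at hpow
  rw [hpow, LinearMap.comp_apply, LinearMap.pow_mulLeft, LinearMap.mulLeft_apply, mul_one,
    sum_pow_eq_sum_piAntidiag, map_sum]
  refine sum_congr rfl fun μ _ => ?_
  rw [← nsmul_eq_mul, map_nsmul, hmonomial, hΦ, Finsupp.coe_equivFunOnFinite_symm]

open ExteriorAlgebra in
theorem inverse_hasseSchmidt_subtop_power_general (M : Type*) [AddCommGroup M]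
    [Module ℤ M] (ε : ℕ → M)
    (Dbar : ℕ → Module.End ℤ (ExteriorAlgebra ℤ M))
    (hB0 : Dbar 0 = 1)
    (hBLeib : ∀ (h : ℕ) (p q : ExteriorAlgebra ℤ M),
      Dbar h (p * q) = ∑ x ∈ Finset.HasAntidiagonal.antidiagonal h, Dbar x.1 p * Dbar x.2 q)
    (hB1 : ∀ i : ℕ, 1 ≤ i → Dbar 1 (ι ℤ (ε i)) = ι ℤ (ε (i + 1)))
    (hBhi : ∀ j i : ℕ, 2 ≤ j → 1 ≤ i → Dbar j (ι ℤ (ε i)) = 0) :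
    ∀ (h m : ℕ), 1 ≤ h → ∀ i : Fin h → ℕ, (∀ j, 1 ≤ i j) →
      (Dbar (h - 1) ^ m) ((List.ofFn fun j => ι ℤ (ε (i j))).prod) =
        ∑ μ ∈ Finset.Nat.antidiagonalTuple h m,
          (Nat.multinomial Finset.univ μ) •
            (List.ofFn fun j =>
              ι ℤ (ε (i j + ∑ j' ∈ Finset.univ.erase j, μ j'))).prod := by
  intro h m hh i hi
  obtain ⟨g, rfl⟩ := Nat.exists_eq_add_one_of_ne_zero (by omega : h ≠ 0)
  let T (μ : Fin (g + 1) → ℕ) : ExteriorAlgebra ℤ M :=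
    (List.ofFn fun j => ι ℤ (ε (i j + ∑ j' ∈ univ.erase j, μ j'))).prod
  have hD0 (x : ExteriorAlgebra ℤ M) : Dbar 0 x = x := LinearMap.congr_fun hB0 x
  have hT (μ : Fin (g + 1) → ℕ) : Dbar g (T μ) = ∑ k, T (μ + Pi.single k 1) := by
    rw [HasseSchmidt.apply_prod_ofFn_succ hD0 hBLeib
      fun k j hj => hBhi j _ hj ((hi k).trans (Nat.le_add_right _ _))]
    refine Fintype.sum_congr _ _ fun k => congrArg _ (List.ofFn_inj.mpr (funext fun j => ?_))
    simp only [Pi.add_apply, sum_add_distrib, sum_pi_single', mem_erase, mem_univ, and_true]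
    by_cases hjk : j = k
    · simp [hjk]
    · simp [hjk, Ne.symm hjk, hB1 _ ((hi j).trans (Nat.le_add_right _ _)), add_assoc]
  simpa [T, Nat.add_sub_cancel, piAntidiag_univ_fin_eq_antidiagonalTuple] using
    (Dbar g).pow_apply_eq_sum_multinomial T hT m

open ExteriorAlgebra in
/-- Proposition 4.2: for the inverse Hasse–Schmidt operators on `⋀M_n`,
`𝔇_{h−1}^m(ε^{i₁} ∧ ⋯ ∧ ε^{i_h}) =
  Σ_{μ∈p_h(m)} (m!/(μ₁!⋯μ_h!)) ε^{i₁+Σ_{j≠1}μ_j} ∧ ⋯ ∧ ε^{i_h+Σ_{j≠h}μ_j}`. -/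
theorem inverse_hasseSchmidt_subtop_power (n : ℕ) (M : Type*) [AddCommGroup M]
    [Module ℤ M] (ε : ℕ → M) (hε : ∀ m : ℕ, n < m → ε m = 0)
    (Dbar : ℕ → Module.End ℤ (ExteriorAlgebra ℤ M))
    (hB0 : Dbar 0 = 1)
    (hBLeib : ∀ (h : ℕ) (p q : ExteriorAlgebra ℤ M),
      Dbar h (p * q) = ∑ x ∈ Finset.HasAntidiagonal.antidiagonal h, Dbar x.1 p * Dbar x.2 q)
    (hB1 : ∀ i : ℕ, 1 ≤ i → Dbar 1 (ι ℤ (ε i)) = ι ℤ (ε (i + 1)))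
    (hBhi : ∀ j i : ℕ, 2 ≤ j → 1 ≤ i → Dbar j (ι ℤ (ε i)) = 0) :
    ∀ (h m : ℕ), 1 ≤ h → ∀ i : Fin h → ℕ, (∀ j, 1 ≤ i j) →
      (Dbar (h - 1) ^ m) ((List.ofFn fun j => ι ℤ (ε (i j))).prod) =
        ∑ μ ∈ Finset.Nat.antidiagonalTuple h m,
          (Nat.multinomial Finset.univ μ) •
            (List.ofFn fun j =>
              ι ℤ (ε (i j + ∑ j' ∈ Finset.univ.erase j, μ j'))).prod :=
  inverse_hasseSchmidt_subtop_power_general M ε Dbar hB0 hBLeib hB1 hBhi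
end

section
/- For the Hasse–Schmidt operators D₁, D₂ on ⋀M_n and any indices i₁ < i₂ < i₃, for each m ≥ 0: D₂^m(ε^{i₁}∧ε^{i₂}∧ε^{i₃}) = Σ_{μ∈p₄(m)} (m!/(μ₁!μ₂!μ₃!μ₄!)) · D₁^{μ₁}(ε^{i₁+μ₁} ∧ ε^{i₂+μ₂+2μ₄} ∧ ε^{i₃+2μ₃+μ₂}). -/
/-!
Send `X₀^p X₁^q X₂^r` linearly to `ε^{i₁+p} ∧ ε^{i₂+q} ∧ ε^{i₃+r}`. By the Leibniz rule, `D₁` and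
`D₂` act on the image as multiplication by the complete homogeneous polynomials
`h₁ = X₀ + X₁ + X₂` and `h₂`. Since `h₂ = X₀ h₁ + X₁X₂ + X₂² + X₁²`, the multinomial theorem
expands `h₂^m`, and each factor `h₁^{μ₀}` is turned back into `D₁^{μ₀}`.
-/

section

open ExteriorAlgebra MvPolynomial

variable (R : Type*) {M : Type*} [CommRing R] [AddCommGroup M] [Module R M]

abbrev wedge3 (ε : ℕ → M) (a b c : ℕ) : ExteriorAlgebra R M :=
  ι R (ε a) * ι R (ε b) * ι R (ε c)

variable {R}

theorem MvPolynomial.monomial_one_fin_three (e : Fin 3 →₀ ℕ) :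
    monomial e (1 : R) = X 0 ^ e 0 * X 1 ^ e 1 * X 2 ^ e 2 := by
  rw [monomial_eq, C_1, one_mul, Finsupp.prod_fintype _ _ (fun _ => pow_zero _),
    Fin.prod_univ_three]

noncomputable def wedgeShift (ε : ℕ → M) (a b c : ℕ) :
    MvPolynomial (Fin 3) R →ₗ[R] ExteriorAlgebra R M :=
  (basisMonomials (Fin 3) R).constr R fun e => wedge3 R ε (a + e 0) (b + e 1) (c + e 2)

theorem wedgeShift_monomial (ε : ℕ → M) (a b c : ℕ) (e : Fin 3 →₀ ℕ) :
    wedgeShift ε a b c (monomial e (1 : R)) = wedge3 R ε (a + e 0) (b + e 1) (c + e 2) :=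
  (basisMonomials (Fin 3) R).constr_basis R _ e

theorem wedgeShift_X_pow (ε : ℕ → M) (a b c p q r : ℕ) :
    wedgeShift ε a b c (X 0 ^ p * X 1 ^ q * X 2 ^ r : MvPolynomial (Fin 3) R) =
      wedge3 R ε (a + p) (b + q) (c + r) := by
  have := wedgeShift_monomial (R := R) ε a b c (Finsupp.equivFunOnFinite.symm ![p, q, r])
  rw [monomial_one_fin_three] at this
  simpa using this

theorem wedgeShift_one (ε : ℕ → M) (a b c : ℕ) :
    wedgeShift ε a b c (1 : MvPolynomial (Fin 3) R) = wedge3 R ε a b c := by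
  simpa using wedgeShift_X_pow (R := R) ε a b c 0 0 0

theorem apply_wedgeShift_of_X_pow {ε : ℕ → M} {a b c : ℕ}
    {f : Module.End R (ExteriorAlgebra R M)}
    {P : MvPolynomial (Fin 3) R}
    (hf : ∀ p q r, f (wedgeShift ε a b c (X 0 ^ p * X 1 ^ q * X 2 ^ r)) =
      wedgeShift ε a b c (P * (X 0 ^ p * X 1 ^ q * X 2 ^ r)))
    (x : MvPolynomial (Fin 3) R) :
    f (wedgeShift ε a b c x) = wedgeShift ε a b c (P * x) := by
  have : f ∘ₗ wedgeShift ε a b c = wedgeShift ε a b c ∘ₗ LinearMap.mulLeft R P :=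
    (basisMonomials (Fin 3) R).ext fun e => by
      simpa [monomial_one_fin_three] using hf (e 0) (e 1) (e 2)
  exact LinearMap.congr_fun this x

theorem pow_apply_wedgeShift {ε : ℕ → M} {a b c : ℕ} {f : Module.End R (ExteriorAlgebra R M)}
    {P : MvPolynomial (Fin 3) R}
    (hf : ∀ x, f (wedgeShift ε a b c x) = wedgeShift ε a b c (P * x)) (k : ℕ)
    (x : MvPolynomial (Fin 3) R) :
    (f ^ k) (wedgeShift ε a b c x) = wedgeShift ε a b c (P ^ k * x) := by
  induction k with
  | zero => simp
  | succ k ih => rw [pow_succ', Module.End.mul_apply, ih, hf, pow_succ', mul_assoc]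

noncomputable def h2Split : Fin 4 → MvPolynomial (Fin 3) R :=
  ![X 0 * (X 0 + X 1 + X 2), X 1 * X 2, X 2 ^ 2, X 1 ^ 2]

theorem sum_h2Split : ∑ j, h2Split (R := R) j =
    X 0 ^ 2 + X 1 ^ 2 + X 2 ^ 2 + X 0 * X 1 + X 0 * X 2 + X 1 * X 2 := by
  rw [Fin.sum_univ_four]
  simp only [h2Split, Matrix.cons_val]
  ring

theorem prod_h2Split_pow (μ : Fin 4 → ℕ) :
    ∏ j, h2Split (R := R) j ^ μ j =
      (X 0 + X 1 + X 2) ^ μ 0 * (X 0 ^ μ 0 * X 1 ^ (μ 1 + 2 * μ 3) * X 2 ^ (2 * μ 2 + μ 1)) := by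
  rw [Fin.prod_univ_four]
  simp only [h2Split, Matrix.cons_val, mul_pow]
  ring

variable {ε : ℕ → M} {D : ℕ → Module.End R (ExteriorAlgebra R M)}

theorem D_one_wedge3
    (hLeib : ∀ (h : ℕ) (p q : ExteriorAlgebra R M),
      D h (p * q) = ∑ x ∈ Finset.HasAntidiagonal.antidiagonal h, D x.1 p * D x.2 q)
    (hinit : ∀ l i : ℕ, 1 ≤ i → D l (ι R (ε i)) = ι R (ε (i + l)))
    {a b c : ℕ} (ha : 1 ≤ a) (hb : 1 ≤ b) (hc : 1 ≤ c) :
    D 1 (wedge3 R ε a b c) =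
      wedge3 R ε (a + 1) b c + wedge3 R ε a (b + 1) c + wedge3 R ε a b (c + 1) := by
  have h1 : (Finset.HasAntidiagonal.antidiagonal 1 : Finset (ℕ × ℕ)) = {(0, 1), (1, 0)} := rfl
  have h0 : (Finset.HasAntidiagonal.antidiagonal 0 : Finset (ℕ × ℕ)) = {(0, 0)} := rfl
  simp only [hLeib, h1, h0, hinit _ _ ha, hinit _ _ hb, hinit _ _ hc, Finset.mem_singleton,
    Prod.mk.injEq, zero_ne_one, one_ne_zero, and_self, not_false_eq_true, Finset.sum_insert,
    Finset.sum_singleton, add_zero]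
  noncomm_ring

theorem D_two_wedge3
    (hLeib : ∀ (h : ℕ) (p q : ExteriorAlgebra R M),
      D h (p * q) = ∑ x ∈ Finset.HasAntidiagonal.antidiagonal h, D x.1 p * D x.2 q)
    (hinit : ∀ l i : ℕ, 1 ≤ i → D l (ι R (ε i)) = ι R (ε (i + l)))
    {a b c : ℕ} (ha : 1 ≤ a) (hb : 1 ≤ b) (hc : 1 ≤ c) :
    D 2 (wedge3 R ε a b c) =
      wedge3 R ε (a + 2) b c + wedge3 R ε a (b + 2) c + wedge3 R ε a b (c + 2) +
        wedge3 R ε (a + 1) (b + 1) c + wedge3 R ε (a + 1) b (c + 1) +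
          wedge3 R ε a (b + 1) (c + 1) := by
  have h2 : (Finset.HasAntidiagonal.antidiagonal 2 : Finset (ℕ × ℕ)) =
    {(0, 2), (1, 1), (2, 0)} := rfl
  have h1 : (Finset.HasAntidiagonal.antidiagonal 1 : Finset (ℕ × ℕ)) = {(0, 1), (1, 0)} := rfl
  have h0 : (Finset.HasAntidiagonal.antidiagonal 0 : Finset (ℕ × ℕ)) = {(0, 0)} := rfl
  simp only [hLeib, h2, h1, h0, hinit _ _ ha, hinit _ _ hb, hinit _ _ hc, Finset.mem_insert,
    Finset.mem_singleton, Prod.mk.injEq, zero_ne_one, one_ne_zero, OfNat.ofNat_ne_one,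
    OfNat.one_ne_ofNat, OfNat.zero_ne_ofNat, OfNat.ofNat_ne_zero, and_self, or_self,
    not_false_eq_true, Finset.sum_insert, Finset.sum_singleton, add_zero]
  noncomm_ring

theorem D_one_wedgeShift
    (hLeib : ∀ (h : ℕ) (p q : ExteriorAlgebra R M),
      D h (p * q) = ∑ x ∈ Finset.HasAntidiagonal.antidiagonal h, D x.1 p * D x.2 q)
    (hinit : ∀ l i : ℕ, 1 ≤ i → D l (ι R (ε i)) = ι R (ε (i + l)))
    {a b c : ℕ} (ha : 1 ≤ a) (hb : 1 ≤ b) (hc : 1 ≤ c) (x : MvPolynomial (Fin 3) R) :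
    D 1 (wedgeShift ε a b c x) = wedgeShift ε a b c ((X 0 + X 1 + X 2) * x) := by
  refine apply_wedgeShift_of_X_pow (fun p q r => ?_) x
  have hP : (X 0 + X 1 + X 2) * (X 0 ^ p * X 1 ^ q * X 2 ^ r : MvPolynomial (Fin 3) R) =
      X 0 ^ (p + 1) * X 1 ^ q * X 2 ^ r + X 0 ^ p * X 1 ^ (q + 1) * X 2 ^ r +
        X 0 ^ p * X 1 ^ q * X 2 ^ (r + 1) := by ring
  simp only [hP, map_add, wedgeShift_X_pow, ← add_assoc]
  exact D_one_wedge3 hLeib hinit (by omega) (by omega) (by omega)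

theorem D_two_wedgeShift
    (hLeib : ∀ (h : ℕ) (p q : ExteriorAlgebra R M),
      D h (p * q) = ∑ x ∈ Finset.HasAntidiagonal.antidiagonal h, D x.1 p * D x.2 q)
    (hinit : ∀ l i : ℕ, 1 ≤ i → D l (ι R (ε i)) = ι R (ε (i + l)))
    {a b c : ℕ} (ha : 1 ≤ a) (hb : 1 ≤ b) (hc : 1 ≤ c) (x : MvPolynomial (Fin 3) R) :
    D 2 (wedgeShift ε a b c x) = wedgeShift ε a b c
      ((X 0 ^ 2 + X 1 ^ 2 + X 2 ^ 2 + X 0 * X 1 + X 0 * X 2 + X 1 * X 2) * x) := by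
  refine apply_wedgeShift_of_X_pow (fun p q r => ?_) x
  have hP : (X 0 ^ 2 + X 1 ^ 2 + X 2 ^ 2 + X 0 * X 1 + X 0 * X 2 + X 1 * X 2) *
      (X 0 ^ p * X 1 ^ q * X 2 ^ r : MvPolynomial (Fin 3) R) =
      X 0 ^ (p + 2) * X 1 ^ q * X 2 ^ r + X 0 ^ p * X 1 ^ (q + 2) * X 2 ^ r +
        X 0 ^ p * X 1 ^ q * X 2 ^ (r + 2) + X 0 ^ (p + 1) * X 1 ^ (q + 1) * X 2 ^ r +
          X 0 ^ (p + 1) * X 1 ^ q * X 2 ^ (r + 1) + X 0 ^ p * X 1 ^ (q + 1) * X 2 ^ (r + 1) := by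
    ring
  simp only [hP, map_add, wedgeShift_X_pow, ← add_assoc]
  exact D_two_wedge3 hLeib hinit (by omega) (by omega) (by omega)

end

open ExteriorAlgebra in
theorem hasseSchmidt_D2_pow_triple_general (M : Type*) [AddCommGroup M]
    [Module ℤ M] (ε : ℕ → M)
    (D : ℕ → Module.End ℤ (ExteriorAlgebra ℤ M))
    (hLeib : ∀ (h : ℕ) (p q : ExteriorAlgebra ℤ M),
      D h (p * q) = ∑ x ∈ Finset.HasAntidiagonal.antidiagonal h, D x.1 p * D x.2 q)
    (hinit : ∀ l i : ℕ, 1 ≤ i → D l (ι ℤ (ε i)) = ι ℤ (ε (i + l)))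
    (m i₁ i₂ i₃ : ℕ) (h1 : 1 ≤ i₁) (h12 : i₁ < i₂) (h23 : i₂ < i₃) :
    (D 2 ^ m) (ι ℤ (ε i₁) * ι ℤ (ε i₂) * ι ℤ (ε i₃)) =
      ∑ μ ∈ Finset.Nat.antidiagonalTuple 4 m,
        (Nat.multinomial Finset.univ μ) •
          (D 1 ^ (μ 0))
            (ι ℤ (ε (i₁ + μ 0)) * ι ℤ (ε (i₂ + μ 1 + 2 * μ 3)) *
              ι ℤ (ε (i₃ + 2 * μ 2 + μ 1))) := by
  have h2 : 1 ≤ i₂ := by omega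
  have h3 : 1 ≤ i₃ := by omega
  have hD1 := pow_apply_wedgeShift (D_one_wedgeShift hLeib hinit h1 h2 h3)
  have hD2 := pow_apply_wedgeShift (D_two_wedgeShift hLeib hinit h1 h2 h3)
  change (D 2 ^ m) (wedge3 ℤ ε i₁ i₂ i₃) = _
  rw [← wedgeShift_one]
  refine (hD2 m 1).trans ?_
  rw [mul_one, ← sum_h2Split,
    Finset.sum_pow_eq_sum_piAntidiag, Finset.piAntidiag_univ_fin_eq_antidiagonalTuple, map_sum]
  refine Finset.sum_congr rfl fun μ _ => ?_
  rw [prod_h2Split_pow, ← nsmul_eq_mul, map_nsmul, ← hD1, wedgeShift_X_pow, add_assoc i₂,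
    add_assoc i₃]
  rfl

open ExteriorAlgebra in
/-- Proposition 4.3 (i): for the Hasse–Schmidt operators on `⋀M_n`,
`D₂^m(ε^{i₁}∧ε^{i₂}∧ε^{i₃}) = Σ_{μ∈p₄(m)} (m!/(μ₁!μ₂!μ₃!μ₄!))
  D₁^{μ₁}(ε^{i₁+μ₁} ∧ ε^{i₂+μ₂+2μ₄} ∧ ε^{i₃+2μ₃+μ₂})`. -/
theorem hasseSchmidt_D2_pow_triple (n : ℕ) (M : Type*) [AddCommGroup M]
    [Module ℤ M] (ε : ℕ → M) (hε : ∀ m : ℕ, n < m → ε m = 0)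
    (D : ℕ → Module.End ℤ (ExteriorAlgebra ℤ M))
    (hD0 : D 0 = 1)
    (hLeib : ∀ (h : ℕ) (p q : ExteriorAlgebra ℤ M),
      D h (p * q) = ∑ x ∈ Finset.HasAntidiagonal.antidiagonal h, D x.1 p * D x.2 q)
    (hinit : ∀ l i : ℕ, 1 ≤ i → D l (ι ℤ (ε i)) = ι ℤ (ε (i + l)))
    (m i₁ i₂ i₃ : ℕ) (h1 : 1 ≤ i₁) (h12 : i₁ < i₂) (h23 : i₂ < i₃) :
    (D 2 ^ m) (ι ℤ (ε i₁) * ι ℤ (ε i₂) * ι ℤ (ε i₃)) =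
      ∑ μ ∈ Finset.Nat.antidiagonalTuple 4 m,
        (Nat.multinomial Finset.univ μ) •
          (D 1 ^ (μ 0))
            (ι ℤ (ε (i₁ + μ 0)) * ι ℤ (ε (i₂ + μ 1 + 2 * μ 3)) *
              ι ℤ (ε (i₃ + 2 * μ 2 + μ 1))) :=
  hasseSchmidt_D2_pow_triple_general M ε D hLeib hinit m i₁ i₂ i₃ h1 h12 h23
end

section
/- For the inverse Hasse–Schmidt operator 𝔇₂ on ⋀M_n: 𝔇₂^m(ε^{i₁}∧ε^{i₂}∧ε^{i₃}∧ε^{i₄}) = Σ_{μ∈p₄(m), 0≤l≤μ₁+μ₂} (m!/(μ₁!μ₂!μ₃!μ₄!)) C(μ₁+μ₂, l) · ε^{i₁+μ₁+μ₄} ∧ ε^{i₂+μ₂+μ₄} ∧ ε^{i₃+μ₃+l} ∧ ε^{i₄+μ₁+μ₂+μ₃−l}. -/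
/-!
On a wedge of four generators with indices `≥ 1`, the Leibniz rule makes `𝔇₂` raise two of the
four indices by one, summed over the six pairs of positions. Encoding
`ε^{i₀+e₀} ∧ ε^{i₁+e₁} ∧ ε^{i₂+e₂} ∧ ε^{i₃+e₃}` by the monomial `X^e` (`shiftedWedge`), `𝔇₂`
becomes multiplication by the elementary symmetric polynomial `e₂(X₀, X₁, X₂, X₃)`, hence `𝔇₂^m`
is multiplication by `e₂^m`. Writing `e₂ = X₀(X₂ + X₃) + X₁(X₂ + X₃) + X₂X₃ + X₀X₁`, the
multinomial theorem and the binomial expansion of `(X₂ + X₃)^(μ₀ + μ₁)` give the coefficients.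
No factors are ever reordered, so antisymmetry plays no role.
-/

open ExteriorAlgebra Finset MvPolynomial

theorem esymm_fin_four_two (R : Type*) [CommSemiring R] :
    esymm (Fin 4) R 2 = X 0 * X 1 + X 0 * X 2 + X 0 * X 3 + X 1 * X 2 + X 1 * X 3 + X 2 * X 3 := by
  rw [esymm, show powersetCard 2 (univ : Finset (Fin 4)) =
    {{0, 1}, {0, 2}, {0, 3}, {1, 2}, {1, 3}, {2, 3}} by decide]
  repeat rw [sum_insert (by decide)]
  simp [add_assoc]

theorem pairwise_products_four_pow {R : Type*} [CommSemiring R] (a b c d : R) (m : ℕ) :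
    (a * b + a * c + a * d + b * c + b * d + c * d) ^ m =
      ∑ μ ∈ Nat.antidiagonalTuple 4 m, ∑ l ∈ range (μ 0 + μ 1 + 1),
        (Nat.multinomial univ μ * (μ 0 + μ 1).choose l) •
          (a ^ (μ 0 + μ 3) * b ^ (μ 1 + μ 3) * c ^ (μ 2 + l) * d ^ (μ 0 + μ 1 + μ 2 - l)) := by
  have hsplit : a * b + a * c + a * d + b * c + b * d + c * d =
      ∑ j, ![a * (c + d), b * (c + d), c * d, a * b] j := by
    simp only [Fin.sum_univ_four, Matrix.cons_val]; ring
  rw [hsplit, sum_pow_eq_sum_piAntidiag, piAntidiag_univ_fin_eq_antidiagonalTuple]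
  refine sum_congr rfl fun μ _ => ?_
  have hcd : (c + d) ^ μ 0 * (c + d) ^ μ 1 = (c + d) ^ (μ 0 + μ 1) := (pow_add ..).symm
  calc
    _ = Nat.multinomial univ μ *
          (a ^ (μ 0 + μ 3) * b ^ (μ 1 + μ 3) * (c * d) ^ μ 2 * (c + d) ^ (μ 0 + μ 1)) := by
      simp only [Fin.prod_univ_four, Matrix.cons_val, mul_pow, ← hcd]; ring
    _ = _ := by
      rw [add_pow, mul_sum, mul_sum]
      refine sum_congr rfl fun l hlr => ?_
      have hl : l ≤ μ 0 + μ 1 := Nat.lt_succ_iff.mp (mem_range.mp hlr)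
      rw [nsmul_eq_mul, show μ 0 + μ 1 + μ 2 - l = (μ 0 + μ 1 - l) + μ 2 by omega]
      push_cast; ring

section HasseSchmidt

variable {R A : Type*} [Semiring R] [Semiring A] [Module R A] {D : ℕ → Module.End R A}
  (hD0 : D 0 = 1)
  (hD : ∀ (h : ℕ) (p q : A), D h (p * q) = ∑ x ∈ antidiagonal h, D x.1 p * D x.2 q)
include hD0 hD

theorem hasseSchmidt_one_apply_mul (p q : A) : D 1 (p * q) = D 1 p * q + p * D 1 q := by
  simp [hD, Nat.sum_antidiagonal_succ, hD0, add_comm]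

theorem hasseSchmidt_two_apply_mul (p q : A) :
    D 2 (p * q) = D 2 p * q + D 1 p * D 1 q + p * D 2 q := by
  simp [hD, Nat.sum_antidiagonal_succ, hD0]
  abel

end HasseSchmidt

section Wedge

variable {M : Type*} [AddCommGroup M] [Module ℤ M]

noncomputable def shiftedWedge (ε : ℕ → M) (i : Fin 4 → ℕ) :
    MvPolynomial (Fin 4) ℤ →ₗ[ℤ] ExteriorAlgebra ℤ M :=
  (basisMonomials (Fin 4) ℤ).constr ℤ fun e =>
    ι ℤ (ε (i 0 + e 0)) * ι ℤ (ε (i 1 + e 1)) * ι ℤ (ε (i 2 + e 2)) * ι ℤ (ε (i 3 + e 3))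

variable (ε : ℕ → M) (i : Fin 4 → ℕ)

theorem shiftedWedge_monomial (e : Fin 4 →₀ ℕ) :
    shiftedWedge ε i (monomial e 1) =
      ι ℤ (ε (i 0 + e 0)) * ι ℤ (ε (i 1 + e 1)) * ι ℤ (ε (i 2 + e 2)) * ι ℤ (ε (i 3 + e 3)) :=
  (basisMonomials (Fin 4) ℤ).constr_basis ℤ _ e

theorem shiftedWedge_X_pow (a b c d : ℕ) :
    shiftedWedge ε i (X 0 ^ a * X 1 ^ b * X 2 ^ c * X 3 ^ d) =
      ι ℤ (ε (i 0 + a)) * ι ℤ (ε (i 1 + b)) * ι ℤ (ε (i 2 + c)) * ι ℤ (ε (i 3 + d)) := by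
  simp only [X_pow_eq_monomial, monomial_mul, one_mul, shiftedWedge_monomial]
  simp

variable {ε} {Dbar : ℕ → Module.End ℤ (ExteriorAlgebra ℤ M)} (hB0 : Dbar 0 = 1)
  (hBLeib : ∀ (h : ℕ) (p q : ExteriorAlgebra ℤ M),
      Dbar h (p * q) = ∑ x ∈ antidiagonal h, Dbar x.1 p * Dbar x.2 q)
  (hB1 : ∀ i : ℕ, 1 ≤ i → Dbar 1 (ι ℤ (ε i)) = ι ℤ (ε (i + 1)))
  (hBhi : ∀ j i : ℕ, 2 ≤ j → 1 ≤ i → Dbar j (ι ℤ (ε i)) = 0)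

include hB0 hBLeib hB1 in
theorem hasseSchmidt_one_apply_ι_mul_ι {x y : ℕ} (hx : 1 ≤ x) (hy : 1 ≤ y) :
    Dbar 1 (ι ℤ (ε x) * ι ℤ (ε y)) = ι ℤ (ε (x + 1)) * ι ℤ (ε y) + ι ℤ (ε x) * ι ℤ (ε (y + 1)) := by
  rw [hasseSchmidt_one_apply_mul hB0 hBLeib, hB1 x hx, hB1 y hy]

include hB0 hBLeib hB1 hBhi

theorem hasseSchmidt_two_apply_ι_mul_ι {x y : ℕ} (hx : 1 ≤ x) (hy : 1 ≤ y) :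
    Dbar 2 (ι ℤ (ε x) * ι ℤ (ε y)) = ι ℤ (ε (x + 1)) * ι ℤ (ε (y + 1)) := by
  rw [hasseSchmidt_two_apply_mul hB0 hBLeib, hBhi 2 x le_rfl hx, hBhi 2 y le_rfl hy, hB1 x hx,
    hB1 y hy, zero_mul, mul_zero, zero_add, add_zero]

theorem hasseSchmidt_two_apply_shiftedWedge (hi : ∀ j, 1 ≤ i j) (p : MvPolynomial (Fin 4) ℤ) :
    Dbar 2 (shiftedWedge ε i p) = shiftedWedge ε i (esymm (Fin 4) ℤ 2 * p) := by
  refine LinearMap.congr_fun (f := Dbar 2 ∘ₗ shiftedWedge ε i)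
    (g := shiftedWedge ε i ∘ₗ LinearMap.mulLeft ℤ (esymm (Fin 4) ℤ 2)) ?_ p
  refine (basisMonomials (Fin 4) ℤ).ext fun e => ?_
  have hpos (j : Fin 4) (k : ℕ) : 1 ≤ i j + k := (hi j).trans (Nat.le_add_right _ _)
  simp only [coe_basisMonomials, LinearMap.comp_apply, LinearMap.mulLeft_apply,
    shiftedWedge_monomial]
  rw [mul_assoc _ (ι ℤ _), hasseSchmidt_two_apply_mul hB0 hBLeib,
    hasseSchmidt_two_apply_ι_mul_ι hB0 hBLeib hB1 hBhi (hpos 0 _) (hpos 1 _),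
    hasseSchmidt_two_apply_ι_mul_ι hB0 hBLeib hB1 hBhi (hpos 2 _) (hpos 3 _),
    hasseSchmidt_one_apply_ι_mul_ι hB0 hBLeib hB1 (hpos 0 _) (hpos 1 _),
    hasseSchmidt_one_apply_ι_mul_ι hB0 hBLeib hB1 (hpos 2 _) (hpos 3 _)]
  simp only [esymm_fin_four_two, add_mul, X, monomial_mul, one_mul, map_add,
    shiftedWedge_monomial, Finsupp.add_apply, Finsupp.single_apply]
  simp only [Fin.reduceEq, if_true, if_false, add_zero, zero_add, ← add_assoc]
  noncomm_ring

theorem hasseSchmidt_two_pow_apply_shiftedWedge (hi : ∀ j, 1 ≤ i j) (m : ℕ)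
    (p : MvPolynomial (Fin 4) ℤ) :
    (Dbar 2 ^ m) (shiftedWedge ε i p) = shiftedWedge ε i (esymm (Fin 4) ℤ 2 ^ m * p) := by
  induction m with
  | zero => simp
  | succ m ih =>
    rw [pow_succ', Module.End.mul_apply, ih,
      hasseSchmidt_two_apply_shiftedWedge i hB0 hBLeib hB1 hBhi hi, ← mul_assoc, ← pow_succ']

end Wedge

open ExteriorAlgebra in
theorem inverse_hasseSchmidt_D2bar_pow_quadruple_general (M : Type*)
    [AddCommGroup M] [Module ℤ M] (ε : ℕ → M)
    (Dbar : ℕ → Module.End ℤ (ExteriorAlgebra ℤ M))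
    (hB0 : Dbar 0 = 1)
    (hBLeib : ∀ (h : ℕ) (p q : ExteriorAlgebra ℤ M),
      Dbar h (p * q) = ∑ x ∈ Finset.HasAntidiagonal.antidiagonal h, Dbar x.1 p * Dbar x.2 q)
    (hB1 : ∀ i : ℕ, 1 ≤ i → Dbar 1 (ι ℤ (ε i)) = ι ℤ (ε (i + 1)))
    (hBhi : ∀ j i : ℕ, 2 ≤ j → 1 ≤ i → Dbar j (ι ℤ (ε i)) = 0)
    (m i₁ i₂ i₃ i₄ : ℕ) (h1 : 1 ≤ i₁) (h12 : i₁ < i₂) (h23 : i₂ < i₃)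
    (h34 : i₃ < i₄) :
    (Dbar 2 ^ m) (ι ℤ (ε i₁) * ι ℤ (ε i₂) * ι ℤ (ε i₃) * ι ℤ (ε i₄)) =
      ∑ μ ∈ Finset.Nat.antidiagonalTuple 4 m,
        ∑ l ∈ Finset.range (μ 0 + μ 1 + 1),
          ((Nat.multinomial Finset.univ μ) * (μ 0 + μ 1).choose l) •
            (ι ℤ (ε (i₁ + μ 0 + μ 3)) * ι ℤ (ε (i₂ + μ 1 + μ 3)) *
              ι ℤ (ε (i₃ + μ 2 + l)) *
              ι ℤ (ε (i₄ + μ 0 + μ 1 + μ 2 - l))) := by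
  have hi : ∀ j, 1 ≤ ![i₁, i₂, i₃, i₄] j := by
    intro j; fin_cases j <;> simp <;> omega
  have hword : ι ℤ (ε i₁) * ι ℤ (ε i₂) * ι ℤ (ε i₃) * ι ℤ (ε i₄) =
      shiftedWedge ε ![i₁, i₂, i₃, i₄] 1 := by
    simpa using (shiftedWedge_X_pow ε ![i₁, i₂, i₃, i₄] 0 0 0 0).symm
  rw [hword, hasseSchmidt_two_pow_apply_shiftedWedge _ hB0 hBLeib hB1 hBhi hi, mul_one,
    esymm_fin_four_two, pairwise_products_four_pow]
  simp only [map_sum, map_nsmul, shiftedWedge_X_pow]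
  refine sum_congr rfl fun μ _ => sum_congr rfl fun l hlr => ?_
  have hl : l ≤ μ 0 + μ 1 := Nat.lt_succ_iff.mp (mem_range.mp hlr)
  rw [show i₄ + μ 0 + μ 1 + μ 2 - l = i₄ + (μ 0 + μ 1 + μ 2 - l) by omega]
  simp only [Matrix.cons_val, add_assoc]

open ExteriorAlgebra in
/-- Proposition 4.3 (iii): for the inverse Hasse–Schmidt operator `𝔇₂` on `⋀M_n`,
`𝔇₂^m(ε^{i₁}∧ε^{i₂}∧ε^{i₃}∧ε^{i₄}) = Σ_{μ∈p₄(m), 0≤l≤μ₁+μ₂}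
  (m!/(μ₁!μ₂!μ₃!μ₄!)) C(μ₁+μ₂,l)
  ε^{i₁+μ₁+μ₄} ∧ ε^{i₂+μ₂+μ₄} ∧ ε^{i₃+μ₃+l} ∧ ε^{i₄+μ₁+μ₂+μ₃−l}`. -/
theorem inverse_hasseSchmidt_D2bar_pow_quadruple (n : ℕ) (M : Type*)
    [AddCommGroup M] [Module ℤ M] (ε : ℕ → M) (hε : ∀ m : ℕ, n < m → ε m = 0)
    (Dbar : ℕ → Module.End ℤ (ExteriorAlgebra ℤ M))
    (hB0 : Dbar 0 = 1)
    (hBLeib : ∀ (h : ℕ) (p q : ExteriorAlgebra ℤ M),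
      Dbar h (p * q) = ∑ x ∈ Finset.HasAntidiagonal.antidiagonal h, Dbar x.1 p * Dbar x.2 q)
    (hB1 : ∀ i : ℕ, 1 ≤ i → Dbar 1 (ι ℤ (ε i)) = ι ℤ (ε (i + 1)))
    (hBhi : ∀ j i : ℕ, 2 ≤ j → 1 ≤ i → Dbar j (ι ℤ (ε i)) = 0)
    (m i₁ i₂ i₃ i₄ : ℕ) (h1 : 1 ≤ i₁) (h12 : i₁ < i₂) (h23 : i₂ < i₃)
    (h34 : i₃ < i₄) :
    (Dbar 2 ^ m) (ι ℤ (ε i₁) * ι ℤ (ε i₂) * ι ℤ (ε i₃) * ι ℤ (ε i₄)) =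
      ∑ μ ∈ Finset.Nat.antidiagonalTuple 4 m,
        ∑ l ∈ Finset.range (μ 0 + μ 1 + 1),
          ((Nat.multinomial Finset.univ μ) * (μ 0 + μ 1).choose l) •
            (ι ℤ (ε (i₁ + μ 0 + μ 3)) * ι ℤ (ε (i₂ + μ 1 + μ 3)) *
              ι ℤ (ε (i₃ + μ 2 + l)) *
              ι ℤ (ε (i₄ + μ 0 + μ 1 + μ 2 - l))) :=
  inverse_hasseSchmidt_D2bar_pow_quadruple_general M ε Dbar hB0 hBLeib hB1 hBhi m i₁ i₂ i₃ i₄ h1 h12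
    h23 h34
end

section
/- (Scherbak's formula, combinatorial form.) Let q₁,…,q_h be nonnegative integers with q_j ≤ n for all j and q₁+⋯+q_h = 2n. Then N(n) − N(n+1) = Σ_{I⊆{1,…,h}} (−1)^{h+1−|I|} C(Σ_{i∈I}q_i + |I| − n − 1, h − 2), where N(m) is the number of h-tuples (m₁,…,m_h) of nonnegative integers with m_j ≤ q_j and Σm_j = m. -/
/-!
Inclusion–exclusion over the set `I` of coordinates exceeding their bound, together with stars and
bars, gives `N(m) = Σ_I (-1)^|I| C(m - Σ_I (q_i + 1) + h - 1, h - 1)`. Pascal's rule turns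
`N(n) - N(n+1)` into the same alternating sum with `C(·, h - 2)` and one more sign, and because
`Σ q_j = 2n`, replacing `I` by its complement turns the argument `n - Σ_I q_i - |I| + h - 1` into
`Σ_{Iᶜ} q_i + |Iᶜ| - n - 1`.
-/

/-- Integer binomial coefficient with the convention `C(a,b) = 0` when `a < 0`
or `b < 0` (and, as usual, when `b > a`). -/
def izChoose (a b : ℤ) : ℤ :=
  if a < 0 ∨ b < 0 then 0 else (a.toNat).choose b.toNat

theorem izChoose_natCast (a b : ℕ) : izChoose a b = a.choose b := by
  simp [izChoose]

theorem izChoose_eq_zero_of_lt {a b : ℤ} (h : a < b) : izChoose a b = 0 := by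
  unfold izChoose
  split_ifs
  · rfl
  · rw [Nat.choose_eq_zero_of_lt (by omega), Nat.cast_zero]

theorem izChoose_add_one_add_one {a b : ℤ} (hb : 0 ≤ b) :
    izChoose (a + 1) (b + 1) = izChoose a b + izChoose a (b + 1) := by
  lift b to ℕ using hb
  rcases lt_or_ge a 0 with ha | ha
  · rw [izChoose_eq_zero_of_lt (by omega), izChoose_eq_zero_of_lt (by omega),
      izChoose_eq_zero_of_lt (by omega), add_zero]
  · lift a to ℕ using ha
    rw [← Nat.cast_succ, ← Nat.cast_succ, izChoose_natCast, izChoose_natCast, izChoose_natCast,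
      Nat.choose_succ_succ', Nat.cast_add]

open Finset

theorem Finset.card_filter_forall_not_eq_sum_powerset {α ι : Type*} [DecidableEq ι]
    (s : Finset α) (t : Finset ι) (P : ι → α → Prop) [∀ i, DecidablePred (P i)] :
    (#{a ∈ s | ∀ i ∈ t, ¬ P i a} : ℤ) =
      ∑ u ∈ t.powerset, (-1 : ℤ) ^ #u * #{a ∈ s | ∀ i ∈ u, P i a} := by
  have pointwise (a : α) : (if ∀ i ∈ t, ¬ P i a then 1 else 0 : ℤ) =
      ∑ u ∈ t.powerset, (-1) ^ #u * if ∀ i ∈ u, P i a then 1 else 0 := by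
    have hfilter : {u ∈ t.powerset | ∀ i ∈ u, P i a} = {i ∈ t | P i a}.powerset := by
      ext u
      simp only [mem_filter, mem_powerset, subset_iff]
      exact ⟨fun h i hi => ⟨h.1 hi, h.2 i hi⟩, fun h => ⟨fun i hi => (h hi).1, fun i hi => (h hi).2⟩⟩
    simp only [mul_ite, mul_one, mul_zero]
    rw [← sum_filter, hfilter, sum_powerset_neg_one_pow_card]
    simp only [filter_eq_empty_iff]
  simp only [natCast_card_filter, mul_sum, pointwise]
  exact sum_comm

namespace Finset.Nat

theorem card_antidiagonalTuple (k m : ℕ) : #(antidiagonalTuple k m) = (k + m - 1).choose m := by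
  rw [← piAntidiag_univ_fin_eq_antidiagonalTuple, ← map_sym_eq_piAntidiag, card_map, sym_univ,
    card_univ, Sym.card_sym_eq_multichoose, Fintype.card_fin, Nat.multichoose_eq]

theorem card_filter_ge_antidiagonalTuple {k m : ℕ} {c : Fin k → ℕ} (hc : ∑ i, c i ≤ m) :
    #{μ ∈ antidiagonalTuple k m | ∀ i, c i ≤ μ i} = #(antidiagonalTuple k (m - ∑ i, c i)) := by
  refine card_nbij' (· - c) (· + c) (fun μ hμ => ?_) (fun ν hν => ?_)
    (fun μ hμ => ?_) (fun ν _ => add_tsub_cancel_right ν c)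
  · simp only [mem_coe, mem_filter, mem_antidiagonalTuple] at hμ
    simp only [mem_coe, mem_antidiagonalTuple, Pi.sub_apply]
    rw [sum_tsub_distrib _ fun i _ => hμ.2 i, hμ.1]
  · simp only [mem_coe, mem_antidiagonalTuple] at hν
    simp only [mem_coe, mem_filter, mem_antidiagonalTuple, Pi.add_apply, sum_add_distrib, hν]
    exact ⟨tsub_add_cancel_of_le hc, fun i => Nat.le_add_left _ _⟩
  · simp only [mem_coe, mem_filter] at hμ
    exact tsub_add_cancel_of_le hμ.2

theorem filter_ge_antidiagonalTuple_eq_empty {k m : ℕ} {c : Fin k → ℕ} (hc : m < ∑ i, c i) :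
    {μ ∈ antidiagonalTuple k m | ∀ i, c i ≤ μ i} = ∅ := by
  refine filter_eq_empty_iff.2 fun μ hμ hcμ => hc.not_ge ?_
  rw [← mem_antidiagonalTuple.1 hμ]
  exact sum_le_sum fun i _ => hcμ i

theorem card_filter_ge_antidiagonalTuple_eq_izChoose {k : ℕ} (hk : 1 ≤ k) (m : ℕ)
    (c : Fin k → ℕ) :
    (#{μ ∈ antidiagonalTuple k m | ∀ i, c i ≤ μ i} : ℤ) =
      izChoose (m - ∑ i, c i + k - 1) (k - 1) := by
  rcases le_or_gt (∑ i, c i) m with hc | hc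
  · rw [card_filter_ge_antidiagonalTuple hc, card_antidiagonalTuple,
      Nat.choose_symm_of_eq_add (by omega : k + (m - ∑ i, c i) - 1 = (m - ∑ i, c i) + (k - 1)),
      ← izChoose_natCast]
    congr 1 <;> omega
  · rw [filter_ge_antidiagonalTuple_eq_empty hc, card_empty, Nat.cast_zero,
      izChoose_eq_zero_of_lt (by omega)]

theorem card_filter_le_antidiagonalTuple_eq_sum_izChoose {k : ℕ} (hk : 1 ≤ k) (m : ℕ)
    (q : Fin k → ℕ) :
    (#{μ ∈ antidiagonalTuple k m | ∀ j, μ j ≤ q j} : ℤ) =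
      ∑ I ∈ (univ : Finset (Fin k)).powerset,
        (-1) ^ #I * izChoose (m - (∑ i ∈ I, (q i : ℤ) + #I) + k - 1) (k - 1) := by
  have hinclExcl := card_filter_forall_not_eq_sum_powerset (antidiagonalTuple k m) univ
    fun j μ => q j < μ j
  simp only [mem_univ, true_implies, not_lt] at hinclExcl
  rw [hinclExcl]
  refine sum_congr rfl fun I _ => ?_
  let c : Fin k → ℕ := fun i => if i ∈ I then q i + 1 else 0
  have hlower (μ : Fin k → ℕ) : (∀ i ∈ I, q i < μ i) ↔ ∀ i, c i ≤ μ i := by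
    refine ⟨fun h i => ?_, fun h i hi => by simpa [c, hi] using h i⟩
    by_cases hi : i ∈ I
    · simpa [c, hi] using h i hi
    · simp [c, hi]
  have hsum : ∑ i, c i = ∑ i ∈ I, q i + #I := by
    rw [sum_ite_mem, univ_inter, sum_add_distrib, sum_const, smul_eq_mul, mul_one]
  -- `simp` rather than `rw`: the filter from the inclusion–exclusion lemma carries a different
  -- `Decidable` instance than a freshly elaborated one.
  simp only [hlower]
  rw [card_filter_ge_antidiagonalTuple_eq_izChoose hk, hsum, Nat.cast_add, Nat.cast_sum]

theorem card_filter_le_antidiagonalTuple_sub_succ {k : ℕ} (hk : 2 ≤ k) (m : ℕ)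
    (q : Fin k → ℕ) :
    (#{μ ∈ antidiagonalTuple k m | ∀ j, μ j ≤ q j} : ℤ) -
        #{μ ∈ antidiagonalTuple k (m + 1) | ∀ j, μ j ≤ q j} =
      ∑ I ∈ (univ : Finset (Fin k)).powerset,
        (-1) ^ (#I + 1) * izChoose (m - (∑ i ∈ I, (q i : ℤ) + #I) + k - 1) (k - 2) := by
  rw [card_filter_le_antidiagonalTuple_eq_sum_izChoose (by omega),
    card_filter_le_antidiagonalTuple_eq_sum_izChoose (by omega), ← sum_sub_distrib]
  refine sum_congr rfl fun I _ => ?_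
  set a : ℤ := m - (∑ i ∈ I, (q i : ℤ) + #I) + k - 1
  have hshift : ((m + 1 : ℕ) : ℤ) - (∑ i ∈ I, (q i : ℤ) + #I) + k - 1 = a + 1 := by
    push_cast; ring
  have hpascal : izChoose (a + 1) (k - 1) = izChoose a (k - 2) + izChoose a (k - 1) := by
    have := izChoose_add_one_add_one (a := a) (b := k - 2) (by omega)
    rwa [show (k : ℤ) - 2 + 1 = k - 1 by ring] at this
  rw [hshift, hpascal]
  ring

end Finset.Nat

theorem scherbak_formula_general (n h : ℕ) (hh : 2 ≤ h) (q : Fin h → ℕ)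
    (hsum : ∑ j, q j = 2 * n) :
    (((Finset.Nat.antidiagonalTuple h n).filter fun μ => ∀ j, μ j ≤ q j).card : ℤ) -
      (((Finset.Nat.antidiagonalTuple h (n + 1)).filter fun μ => ∀ j, μ j ≤ q j).card : ℤ) =
      ∑ I ∈ (Finset.univ : Finset (Fin h)).powerset,
        (-1 : ℤ) ^ (h + 1 - I.card) *
          izChoose ((∑ i ∈ I, (q i : ℤ)) + I.card - n - 1) ((h : ℤ) - 2) := by
  rw [Nat.card_filter_le_antidiagonalTuple_sub_succ hh, powerset_univ]
  refine Fintype.sum_equiv (compl_involutive.toPerm _) _ _ fun I => ?_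
  have hcard : (#Iᶜ + #I : ℤ) = h := by
    rw [← Nat.cast_add, card_compl_add_card, Fintype.card_fin]
  have hsumI : ∑ i ∈ Iᶜ, (q i : ℤ) + ∑ i ∈ I, (q i : ℤ) = 2 * n := by
    rw [sum_compl_add_sum]
    exact_mod_cast hsum
  rw [Function.Involutive.coe_toPerm, show h + 1 - #Iᶜ = #I + 1 by omega]
  congr 2
  linear_combination -hsumI - hcard

/-- Scherbak's formula (Theorem 5.5, combinatorial form): with
`N(m) = #{(m₁,…,m_h) ∈ ℕ^h : m_j ≤ q_j, Σ m_j = m}`, `q_j ≤ n`, `Σ q_j = 2n`,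
`N(n) − N(n+1) = Σ_{I⊆{1,…,h}} (−1)^{h+1−|I|} C(Σ_{i∈I} q_i + |I| − n − 1, h − 2)`. -/
theorem scherbak_formula (n h : ℕ) (hh : 2 ≤ h) (q : Fin h → ℕ)
    (hq : ∀ j, q j ≤ n) (hsum : ∑ j, q j = 2 * n) :
    (((Finset.Nat.antidiagonalTuple h n).filter fun μ => ∀ j, μ j ≤ q j).card : ℤ) -
      (((Finset.Nat.antidiagonalTuple h (n + 1)).filter fun μ => ∀ j, μ j ≤ q j).card : ℤ) =
      ∑ I ∈ (Finset.univ : Finset (Fin h)).powerset,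
        (-1 : ℤ) ^ (h + 1 - I.card) *
          izChoose ((∑ i ∈ I, (q i : ℤ)) + I.card - n - 1) ((h : ℤ) - 2) :=
  scherbak_formula_general n h hh q hsum
end

section
/- Degree of a Schubert variety (Schubert's formula) for k = 2: for 1 ≤ i₁ < i₂ ≤ n with w = i₁ + i₂ − 3, the integer ω_{i₁,i₂} := (2(n−2) − w)! · (i₂ − i₁) / ((n − i₁)!(n − i₂)!) equals the coefficient of ε^{n−1}∧ε^{n} in D₁^{2(n−2)−w}(ε^{i₁} ∧ ε^{i₂}), where D₁ is the derivation on ⋀M_n with D₁ε^i = ε^{i+1}. -/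
open Finset in
lemma aux_pow {A : Type*} [Ring A] (D : A →ₗ[ℤ] A)
    (hLeib : ∀ p q : A, D (p * q) = D p * q + p * D q)
    (g h : ℕ → A) (hg : ∀ j, D (g j) = g (j + 1)) (hh : ∀ j, D (h j) = h (j + 1))
    (N : ℕ) :
    (D ^ N) (g 0 * h 0) = ∑ j ∈ range (N + 1), N.choose j • (g j * h (N - j)) := by
  induction N with
  | zero => simp
  | succ N ih =>
    rw [pow_succ', Module.End.mul_apply, ih, map_sum]
    have step : ∀ j ∈ range (N + 1),
        D (N.choose j • (g j * h (N - j))) =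
          N.choose j • (g (j + 1) * h (N - j)) + N.choose j • (g j * h (N + 1 - j)) := by
      intro j hj
      rw [mem_range] at hj
      have e : N - j + 1 = N + 1 - j := by omega
      rw [map_nsmul, hLeib, hg, hh, e, smul_add]
    rw [sum_congr rfl step, sum_add_distrib]
    have e1 : ∑ j ∈ range (N + 2), (N + 1).choose j • (g j * h (N + 1 - j)) =
        (∑ j ∈ range (N + 1), (N.choose j) • (g (j + 1) * h (N - j))) +
        (g 0 * h (N + 1) +
          ∑ j ∈ range (N + 1), (N.choose (j + 1)) • (g (j + 1) * h (N - j))) := by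
      rw [Finset.sum_range_succ' (fun j => (N + 1).choose j • (g j * h (N + 1 - j)))]
      simp only [Nat.choose_succ_succ, add_smul, sum_add_distrib, Nat.choose_zero_right,
        one_smul]
      have h1 : ∀ j ∈ range (N + 1), N.choose j • (g (j + 1) * h (N + 1 - (j + 1))) =
          N.choose j • (g (j + 1) * h (N - j)) := by
        intro j hj
        have e : N + 1 - (j + 1) = N - j := by omega
        rw [e]
      have h2 : ∀ j ∈ range (N + 1), N.choose (j+1) • (g (j + 1) * h (N + 1 - (j + 1))) =
          N.choose (j+1) • (g (j + 1) * h (N - j)) := by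
        intro j hj
        have e : N + 1 - (j + 1) = N - j := by omega
        rw [e]
      rw [sum_congr rfl h1, sum_congr rfl h2]
      abel
    have e2 : ∑ j ∈ range (N + 1), N.choose j • (g j * h (N + 1 - j)) =
        g 0 * h (N + 1) + ∑ j ∈ range (N + 1), N.choose (j + 1) • (g (j + 1) * h (N - j)) := by
      have htop : ∑ j ∈ range (N + 2), N.choose j • (g j * h (N + 1 - j)) =
          ∑ j ∈ range (N + 1), N.choose j • (g j * h (N + 1 - j)) := by
        rw [sum_range_succ, Nat.choose_succ_self, zero_smul, add_zero]
      rw [← htop, Finset.sum_range_succ' (fun j => N.choose j • (g j * h (N + 1 - j)))]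
      have h2 : ∀ j ∈ range (N + 1), N.choose (j+1) • (g (j + 1) * h (N + 1 - (j + 1))) =
          N.choose (j+1) • (g (j + 1) * h (N - j)) := by
        intro j hj
        have e : N + 1 - (j + 1) = N - j := by omega
        rw [e]
      rw [sum_congr rfl h2]
      simp [add_comm]
    rw [e1, e2]

lemma key1_aux (a b : ℕ) :
    (a + b).choose a * ((a + 1).factorial * b.factorial) = (a + b).factorial * (a + 1) := by
  have h0 := Nat.choose_mul_factorial_mul_factorial (Nat.le_add_right a b)
  rw [Nat.add_sub_cancel_left] at h0
  calc (a + b).choose a * ((a + 1).factorial * b.factorial)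
      = (a + 1) * ((a + b).choose a * a.factorial * b.factorial) := by
        rw [Nat.factorial_succ]; ring
    _ = (a + 1) * (a + b).factorial := by rw [h0]
    _ = (a + b).factorial * (a + 1) := by ring

lemma key2_aux (a b : ℕ) :
    (a + b).choose (a + 1) * ((a + 1).factorial * b.factorial) = (a + b).factorial * b := by
  cases b with
  | zero =>
    rw [Nat.add_zero, Nat.choose_eq_zero_of_lt (Nat.lt_succ_self a)]
    simp
  | succ c =>
    have hle : a + 1 ≤ a + (c + 1) := by omega
    have h0 := Nat.choose_mul_factorial_mul_factorial hle
    have e : a + (c + 1) - (a + 1) = c := by omega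
    rw [e] at h0
    calc (a + (c+1)).choose (a + 1) * ((a + 1).factorial * (c+1).factorial)
        = (c + 1) * ((a + (c+1)).choose (a+1) * (a + 1).factorial * c.factorial) := by
          rw [show (c+1).factorial = (c+1) * c.factorial from Nat.factorial_succ c]; ring
      _ = (c + 1) * (a + (c+1)).factorial := by rw [h0]
      _ = (a + (c+1)).factorial * (c + 1) := by ring

lemma choose_le_aux (a b : ℕ) (hb : b ≤ a + 1) :
    (a + b).choose (a + 1) ≤ (a + b).choose a := by
  have h := Nat.choose_succ_right_eq (a + b) a
  rw [Nat.add_sub_cancel_left] at h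
  have h2 : (a + b).choose (a + 1) * (a + 1) ≤ (a + b).choose a * (a + 1) := by
    rw [h]
    exact Nat.mul_le_mul_left _ hb
  exact Nat.le_of_mul_le_mul_right h2 (Nat.succ_pos a)

lemma choose_diff_div (a b : ℕ) (hb : b ≤ a + 1) :
    (a + b).factorial * (a + 1 - b) / ((a + 1).factorial * b.factorial) =
      (a + b).choose a - (a + b).choose (a + 1) := by
  have hpos : 0 < (a + 1).factorial * b.factorial :=
    Nat.mul_pos (Nat.factorial_pos _) (Nat.factorial_pos _)
  refine Nat.div_eq_of_eq_mul_left hpos ?_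
  rw [tsub_mul, key1_aux, key2_aux]
  have e2 : (a + b).factorial * (a + 1) =
      (a + b).factorial * b + (a + b).factorial * (a + 1 - b) := by
    rw [← Nat.mul_add]
    congr 1
    omega
  omega

open ExteriorAlgebra in
/-- Schubert's degree formula for `k = 2`: with `w = i₁ + i₂ − 3` and
`N = 2(n−2) − w`, one has
`D₁^N(ε^{i₁} ∧ ε^{i₂}) = (N!·(i₂−i₁)/((n−i₁)!(n−i₂)!)) · ε^{n−1} ∧ ε^{n}`,
i.e. the coefficient of `ε^{n−1} ∧ ε^{n}` in `D₁^N(ε^{i₁} ∧ ε^{i₂})` is the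
degree `ω_{i₁,i₂}` of the corresponding Schubert variety. -/
theorem schubert_degree_k2 (n i₁ i₂ : ℕ) (h1 : 1 ≤ i₁) (h12 : i₁ < i₂)
    (h2n : i₂ ≤ n) (M : Type*) [AddCommGroup M] [Module ℤ M]
    (ε : ℕ → M) (hε : ∀ m : ℕ, n < m → ε m = 0)
    (D1 : Module.End ℤ (ExteriorAlgebra ℤ M))
    (hLeib : ∀ p q : ExteriorAlgebra ℤ M, D1 (p * q) = D1 p * q + p * D1 q)
    (hinit : ∀ i : ℕ, 1 ≤ i → D1 (ι ℤ (ε i)) = ι ℤ (ε (i + 1))) :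
    (D1 ^ (2 * (n - 2) - (i₁ + i₂ - 3))) (ι ℤ (ε i₁) * ι ℤ (ε i₂)) =
      ((2 * (n - 2) - (i₁ + i₂ - 3)).factorial * (i₂ - i₁) /
          ((n - i₁).factorial * (n - i₂).factorial)) •
        (ι ℤ (ε (n - 1)) * ι ℤ (ε n)) := by
  classical
  set N := 2 * (n - 2) - (i₁ + i₂ - 3) with hNdef
  have hNval : N = 2 * n - 1 - i₁ - i₂ := by omega
  have hg : ∀ j : ℕ, D1 ((fun j => ι ℤ (ε (i₁ + j))) j) = (fun j => ι ℤ (ε (i₁ + j))) (j + 1) :=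
    fun j => hinit (i₁ + j) (by omega)
  have hh : ∀ j : ℕ, D1 ((fun j => ι ℤ (ε (i₂ + j))) j) = (fun j => ι ℤ (ε (i₂ + j))) (j + 1) :=
    fun j => hinit (i₂ + j) (by omega)
  have key : (D1 ^ N) (ι ℤ (ε i₁) * ι ℤ (ε i₂)) =
      ∑ j ∈ Finset.range (N + 1), N.choose j • (ι ℤ (ε (i₁ + j)) * ι ℤ (ε (i₂ + (N - j)))) :=
    aux_pow D1 hLeib _ _ hg hh N
  rw [key]
  set e : ExteriorAlgebra ℤ M := ι ℤ (ε (n - 1)) * ι ℤ (ε n) with he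
  have hterm : ∀ j ∈ Finset.range (N + 1),
      N.choose j • (ι ℤ (ε (i₁ + j)) * ι ℤ (ε (i₂ + (N - j)))) =
        ((if j = n - 1 - i₁ then (N.choose j : ℤ) else 0) +
          (if j = n - i₁ then -(N.choose j : ℤ) else 0)) • e := by
    intro j hj
    rw [Finset.mem_range] at hj
    by_cases hA : j = n - 1 - i₁
    · have eA : i₁ + j = n - 1 := by omega
      have eB : i₂ + (N - j) = n := by omega
      rw [eA, eB, if_pos hA, if_neg (by omega), add_zero, natCast_zsmul]
    · by_cases hB : j = n - i₁
      · have eA : i₁ + j = n := by omega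
        have eB : i₂ + (N - j) = n - 1 := by omega
        have hsw : ι ℤ (ε n) * ι ℤ (ε (n - 1)) = -e := by
          have h0 := ι_add_mul_swap (R := ℤ) (ε n) (ε (n - 1))
          rw [he]
          exact eq_neg_of_add_eq_zero_left h0
        rw [eA, eB, hsw, if_neg hA, if_pos hB, zero_add, neg_zsmul, natCast_zsmul, smul_neg]
      · rw [if_neg hA, if_neg hB, add_zero, zero_smul]
        by_cases hC : n < i₁ + j
        · rw [hε _ hC, map_zero, zero_mul, smul_zero]
        · have : n < i₂ + (N - j) := by omega
          rw [hε _ this, map_zero, mul_zero, smul_zero]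
  rw [Finset.sum_congr rfl hterm, ← Finset.sum_smul, Finset.sum_add_distrib,
    Finset.sum_ite_eq' (Finset.range (N + 1)) (n - 1 - i₁) (fun j => (N.choose j : ℤ)),
    Finset.sum_ite_eq' (Finset.range (N + 1)) (n - i₁) (fun j => -(N.choose j : ℤ))]
  have hmem1 : n - 1 - i₁ ∈ Finset.range (N + 1) := by
    rw [Finset.mem_range]; omega
  rw [if_pos hmem1]
  have h2nd : (if n - i₁ ∈ Finset.range (N + 1) then -(N.choose (n - i₁) : ℤ) else 0) =
      -(N.choose (n - i₁) : ℤ) := by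
    split_ifs with h
    · rfl
    · rw [Finset.mem_range, not_lt] at h
      rw [Nat.choose_eq_zero_of_lt (by omega)]
      simp
  rw [h2nd]
  -- numeric identity
  obtain ⟨a, b, ha, hb, hab, hb1, hi, hd⟩ :
      ∃ a b, n - 1 - i₁ = a ∧ n - i₂ = b ∧ N = a + b ∧ b ≤ a + 1 ∧ n - i₁ = a + 1 ∧
        i₂ - i₁ = a + 1 - b := ⟨n - 1 - i₁, n - i₂, rfl, rfl, by omega, by omega, by omega, by omega⟩
  rw [ha, hb, hab, hi, hd, choose_diff_div a b hb1]
  have hle := choose_le_aux a b hb1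
  have hcast : ((a + b).choose a : ℤ) + -((a + b).choose (a + 1) : ℤ) =
      (((a + b).choose a - (a + b).choose (a + 1) : ℕ) : ℤ) := by omega
  rw [hcast, natCast_zsmul]
end
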